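/- If T is a tree with diameter 3, then the convexity number of the complementary prism TT̄ equals n(T) + Δ(T) − 1. -/

import Mathlib

open SimpleGraph

/-- Adjacency of the complementary prism: copies of `G` and `Gᶜ` joined by a perfect matching. -/
def prismAdj {V : Type*} (G : SimpleGraph V) : V ⊕ V → V ⊕ V → Prop
  | Sum.inl a, Sum.inl b => G.Adj a b
  | Sum.inr a, Sum.inr b => Gᶜ.Adj a b
  | Sum.inl a, Sum.inr b => a = b
  | Sum.inr a, Sum.inl b => a = b

/-- The complementary prism `G G̅` of a graph `G`. -/
def compPrism {V : Type*} (G : SimpleGraph V) : SimpleGraph (V ⊕ V) where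
  Adj := prismAdj G
  symm := by
    constructor
    rintro (a | a) (b | b) h
    · exact h.symm
    · exact h.symm
    · exact h.symm
    · exact h.symm
  loopless := by
    constructor
    rintro (a | a) h
    · exact G.loopless.irrefl a h
    · exact Gᶜ.loopless.irrefl a h

/-- `w` lies on some shortest `u,v`-path (geodesic) of `H`. -/
def inInterval {V : Type*} (H : SimpleGraph V) (u v w : V) : Prop :=
  ∃ p : H.Walk u v, p.IsPath ∧ p.length = H.dist u v ∧ w ∈ p.support

/-- A set of vertices is geodesically convex. -/
def IsGeoConvex {V : Type*} (H : SimpleGraph V) (S : Set V) : Prop :=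
  ∀ u ∈ S, ∀ v ∈ S, ∀ w, inInterval H u v w → w ∈ S

/-- The geodesic convex hull: the smallest convex set containing `S`. -/
def geoHull {V : Type*} (H : SimpleGraph V) (S : Set V) : Set V :=
  ⋂₀ {C | IsGeoConvex H C ∧ S ⊆ C}

/-- The convexity number: maximum cardinality of a proper convex set. -/
noncomputable def convexityNumber {V : Type*} (H : SimpleGraph V) : ℕ :=
  sSup {n | ∃ S : Set V, IsGeoConvex H S ∧ S ≠ Set.univ ∧ S.ncard = n}

/-- The diameter of a graph. -/
noncomputable def graphDiam {V : Type*} (H : SimpleGraph V) : ℕ :=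
  sSup {d | ∃ u v : V, H.dist u v = d}

/-- The eccentricity of a vertex. -/
noncomputable def graphEcc {V : Type*} (H : SimpleGraph V) (u : V) : ℕ :=
  sSup {d | ∃ v : V, H.dist u v = d}

/-- The degree of a vertex. -/
noncomputable def vdeg {V : Type*} (H : SimpleGraph V) (v : V) : ℕ :=
  (H.neighborSet v).ncard

/-- The maximum degree. -/
noncomputable def maxDeg {V : Type*} (H : SimpleGraph V) : ℕ :=
  sSup {d | ∃ v : V, vdeg H v = d}

/-- The number of pendant neighbours of a vertex. -/
noncomputable def pendCount {V : Type*} (H : SimpleGraph V) (w : V) : ℕ :=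
  {v ∈ H.neighborSet w | vdeg H v = 1}.ncard

/-!
A tree of diameter 3 is a double star: adjacent centres `c`, `d` carrying `p ≥ q ≥ 1` further
leaves, so `n = p + q + 2` and `Δ = p + 1`. In the complementary prism, `c` and `d` are at
distance 3 in the copy of `T̄`, and so are a leaf of `c` and a leaf of `d` in the copy of `T`;
the geodesics between either pair cover enough of the prism that a convex set containing one of
these pairs is everything. Hence a proper convex set misses, say, the `T`-copies of all leaves of
`d`, one of the `T̄`-copies of `c`, `d`, and either the `T`-copy of `d` or the `T̄`-copies of the
leaves of `d`: at least `q + 2` vertices. Removing exactly the `T`-copies of `d` and of its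
leaves and the `T̄`-copy of `d` leaves a convex set, since it has diameter 2 and every vertex
outside sees a clique in it.
-/

namespace SimpleGraph

section Metric

variable {W : Type*} {H : SimpleGraph W} {u v w x y : W}

lemma dist_le_two_of_eq_or_adj (hu : u = w ∨ H.Adj u w) (hv : w = v ∨ H.Adj w v) :
    H.dist u v ≤ 2 := by
  rcases hu with rfl | hu <;> rcases hv with rfl | hv
  · simp
  · exact (dist_le hv.toWalk).trans (by simp)
  · exact (dist_le hu.toWalk).trans (by simp)
  · simpa using dist_le (Walk.cons hu hv.toWalk)

lemma dist_eq_two (hne : u ≠ v) (hna : ¬H.Adj u v) (h₁ : H.Adj u w) (h₂ : H.Adj w v) :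
    H.dist u v = 2 := by
  have h := edist_eq_two_iff.mpr ⟨hne, hna, ⟨w, h₁, h₂.symm⟩⟩
  rw [← (h₁.reachable.trans h₂.reachable).coe_dist_eq_edist] at h
  exact_mod_cast h

lemma dist_eq_three (hne : u ≠ v) (hna : ¬H.Adj u v) (hno : ∀ z, H.Adj u z → ¬H.Adj z v)
    (h₁ : H.Adj u x) (h₂ : H.Adj x y) (h₃ : H.Adj y v) : H.dist u v = 3 := by
  have hlt := two_lt_edist_iff.mpr
    ⟨hne, hna, Set.eq_empty_of_forall_notMem fun z hz => hno z hz.1 hz.2.symm⟩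
  rw [← (h₁.reachable.trans (h₂.reachable.trans h₃.reachable)).coe_dist_eq_edist] at hlt
  have hle : H.dist u v ≤ 3 := by
    simpa using dist_le (Walk.cons h₁ (Walk.cons h₂ h₃.toWalk))
  norm_cast at hlt
  omega

lemma Connected.eq_or_adj_of_dist_le_one (hH : H.Connected) (h : H.dist u v ≤ 1) :
    u = v ∨ H.Adj u v := by
  rcases Nat.le_one_iff_eq_zero_or_eq_one.mp h with h | h
  · exact .inl (hH.dist_eq_zero_iff.mp h)
  · exact .inr (dist_eq_one_iff_adj.mp h)

theorem Walk.adj_adj_of_mem_support {p : H.Walk u v} (hp : p.length ≤ 2)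
    (hw : w ∈ p.support) (hwu : w ≠ u) (hwv : w ≠ v) :
    H.Adj u w ∧ H.Adj w v ∧ p.length = 2 := by
  match p, hp with
  | .nil, _ => simp_all
  | .cons _ .nil, _ => simp_all
  | .cons h₁ (.cons h₂ .nil), _ =>
    simp only [support_cons, support_nil, List.mem_cons, List.not_mem_nil, or_false] at hw
    obtain rfl : w = _ := hw.resolve_left hwu |>.resolve_right hwv
    exact ⟨h₁, h₂, rfl⟩
  | .cons _ (.cons _ (.cons _ _)), hp => simp at hp

lemma setOf_dist_finite [Finite W] : {d | ∃ u v : W, H.dist u v = d}.Finite :=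
  (Set.finite_range fun p : W × W => H.dist p.1 p.2).subset
    (by rintro _ ⟨u, v, rfl⟩; exact ⟨(u, v), rfl⟩)

lemma dist_le_graphDiam [Finite W] (u v : W) : H.dist u v ≤ graphDiam H :=
  le_csSup setOf_dist_finite.bddAbove ⟨u, v, rfl⟩

lemma exists_dist_eq_graphDiam [Finite W] (h : graphDiam H ≠ 0) :
    ∃ u v, H.dist u v = graphDiam H :=
  Nat.sSup_mem (Set.nonempty_iff_ne_empty.mpr fun he => h (by simp [graphDiam, he]))
    setOf_dist_finite.bddAbove

end Metric

section Tree

variable {V : Type*} {T : SimpleGraph V} {x c d u v : V}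

lemma IsTree.eq_of_dist_eq_add_one (hT : T.IsTree) {c' : V} (hc : T.Adj c d)
    (hc' : T.Adj c' d) (h : T.dist x d = T.dist x c + 1) (h' : T.dist x d = T.dist x c' + 1) :
    c = c' := by
  obtain ⟨p, hp⟩ := (hT.connected x c).exists_walk_length_eq_dist
  obtain ⟨q, hq⟩ := (hT.connected x c').exists_walk_length_eq_dist
  have hpd := (p.concat hc).isPath_of_length_eq_dist (by simp [hp, h])
  have hqd := (q.concat hc').isPath_of_length_eq_dist (by simp [hq, h'])
  have := congrArg Subtype.val ((hT.isAcyclic.subsingleton_path x d).elim ⟨_, hpd⟩ ⟨_, hqd⟩)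
  exact (Walk.concat_inj this).1

lemma IsTree.dist_le_one_of_dist_eq_add_one (hT : T.IsTree) (hdiam : ∀ a b, T.dist a b ≤ 3)
    (hcd : T.Adj c d) (hvd : T.Adj v d) (hcv : c ≠ v) (h : T.dist x d = T.dist x c + 1) :
    T.dist x c ≤ 1 := by
  rcases hT.dist_eq_dist_add_one_of_adj x hvd.symm with h' | h'
  · exact absurd (hT.eq_of_dist_eq_add_one hcd hvd h h') hcv
  · have := hdiam x v
    omega

lemma IsTree.eq_or_adj_of_forall_dist_le_three (hT : T.IsTree) (hdiam : ∀ a b, T.dist a b ≤ 3)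
    (hcd : T.Adj c d) (huc : T.Adj u c) (hud : u ≠ d) (hvd : T.Adj v d) (hvc : v ≠ c)
    (x : V) : x = c ∨ T.Adj x c ∨ x = d ∨ T.Adj x d := by
  rcases hT.dist_eq_dist_add_one_of_adj x hcd with h | h
  · have := hT.connected.eq_or_adj_of_dist_le_one
      (hT.dist_le_one_of_dist_eq_add_one hdiam hcd.symm huc hud.symm h)
    tauto
  · have := hT.connected.eq_or_adj_of_dist_le_one
      (hT.dist_le_one_of_dist_eq_add_one hdiam hcd hvd hvc.symm h)
    tauto

lemma IsTree.eq_of_adj_of_adj (hT : T.IsTree)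
    (hcover : ∀ x, x = c ∨ T.Adj x c ∨ x = d ∨ T.Adj x d) (hcd : T.Adj c d) {l y : V}
    (hcl : T.Adj c l) (hld : l ≠ d) (hly : T.Adj l y) : y = c := by
  by_contra hyc
  have hcl₁ : T.dist c l = 1 := dist_eq_one_iff_adj.mpr hcl
  have hcy : T.dist c y = 2 := by
    have := hT.dist_eq_dist_add_one_of_adj c hly
    have := hT.connected.dist_eq_zero_iff.not.mpr (Ne.symm hyc)
    omega
  rcases hcover y with rfl | h | rfl | h
  · exact hyc rfl
  · rw [dist_comm, dist_eq_one_iff_adj.mpr h] at hcy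
    omega
  · rw [dist_eq_one_iff_adj.mpr hcd] at hcy
    omega
  · exact hld (hT.eq_of_dist_eq_add_one (x := c) hly h.symm (by omega)
      (by rw [hcy, dist_eq_one_iff_adj.mpr hcd]))

end Tree

end SimpleGraph

section Convex

variable {W : Type*} {H : SimpleGraph W} {S : Set W} {u v w x y : W}

lemma IsGeoConvex.mem_of_mem_support (hS : IsGeoConvex H S) (hu : u ∈ S) (hv : v ∈ S)
    (p : H.Walk u v) (hp : p.length = H.dist u v) (hw : w ∈ p.support) : w ∈ S :=
  hS u hu v hv w ⟨p, p.isPath_of_length_eq_dist hp, hp, hw⟩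

lemma IsGeoConvex.mem_of_dist_eq_two (hS : IsGeoConvex H S) (hu : u ∈ S) (hv : v ∈ S)
    (hd : H.dist u v = 2) (h₁ : H.Adj u w) (h₂ : H.Adj w v) : w ∈ S :=
  hS.mem_of_mem_support hu hv (.cons h₁ h₂.toWalk) (by simp [hd]) (by simp)

lemma IsGeoConvex.mem_of_dist_eq_three (hS : IsGeoConvex H S) (hu : u ∈ S) (hv : v ∈ S)
    (hd : H.dist u v = 3) (h₁ : H.Adj u x) (h₂ : H.Adj x y) (h₃ : H.Adj y v) :
    x ∈ S ∧ y ∈ S :=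
  ⟨hS.mem_of_mem_support hu hv (.cons h₁ (.cons h₂ h₃.toWalk)) (by simp [hd]) (by simp),
    hS.mem_of_mem_support hu hv (.cons h₁ (.cons h₂ h₃.toWalk)) (by simp [hd]) (by simp)⟩

/-- A vertex outside `S` on a geodesic of length at most two has two non-adjacent neighbours
in `S`. -/
lemma isGeoConvex_of_dist_le_two (hdist : ∀ u ∈ S, ∀ v ∈ S, H.dist u v ≤ 2)
    (hnbr : ∀ w ∉ S, ∀ u ∈ S, ∀ v ∈ S,
      H.Adj u w → H.Adj w v → u = v ∨ H.Adj u v) :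
    IsGeoConvex H S := by
  rintro u hu v hv w ⟨p, -, hp, hw⟩
  by_contra hwS
  obtain ⟨h₁, h₂, hp₂⟩ := p.adj_adj_of_mem_support (hp ▸ hdist u hu v hv) hw
    (ne_of_mem_of_not_mem hu hwS).symm (ne_of_mem_of_not_mem hv hwS).symm
  rcases hnbr w hwS u hu v hv h₁ h₂ with rfl | h
  · simp only [dist_self] at hp
    omega
  · rw [dist_eq_one_iff_adj.mpr h] at hp
    omega

end Convex

section DoubleStar

variable {V : Type*} {T : SimpleGraph V} {c d l m x : V}

def leaves (T : SimpleGraph V) (c d : V) : Set V := {x | T.Adj c x ∧ x ≠ d}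

@[simp]
lemma mem_leaves : x ∈ leaves T c d ↔ T.Adj c x ∧ x ≠ d := Iff.rfl

/-- `T` is the double star with adjacent centres `c` and `d`, each carrying at least one leaf. -/
structure IsDoubleStar (T : SimpleGraph V) (c d : V) : Prop where
  adj : T.Adj c d
  mem_cases : ∀ x, x = c ∨ x = d ∨ x ∈ leaves T c d ∨ x ∈ leaves T d c
  eq_left_of_adj : ∀ ⦃l y⦄, l ∈ leaves T c d → T.Adj l y → y = c
  eq_right_of_adj : ∀ ⦃m y⦄, m ∈ leaves T d c → T.Adj m y → y = d
  nonempty_left : (leaves T c d).Nonempty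
  nonempty_right : (leaves T d c).Nonempty

namespace IsDoubleStar

lemma symm (h : IsDoubleStar T c d) : IsDoubleStar T d c where
  adj := h.adj.symm
  mem_cases x := by have := h.mem_cases x; tauto
  eq_left_of_adj := h.eq_right_of_adj
  eq_right_of_adj := h.eq_left_of_adj
  nonempty_left := h.nonempty_right
  nonempty_right := h.nonempty_left

lemma ne (h : IsDoubleStar T c d) : c ≠ d := h.adj.ne

lemma adj_iff_of_mem_left (h : IsDoubleStar T c d) (hl : l ∈ leaves T c d) {y : V} :
    T.Adj l y ↔ y = c :=
  ⟨(h.eq_left_of_adj hl ·), by rintro rfl; exact hl.1.symm⟩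

lemma not_adj_of_mem_left (h : IsDoubleStar T c d) (hl : l ∈ leaves T c d) {y : V}
    (hy : y ≠ c) : ¬T.Adj l y :=
  fun ha => hy (h.eq_left_of_adj hl ha)

lemma not_mem_left_of_mem_right (h : IsDoubleStar T c d) (hm : m ∈ leaves T d c) :
    m ∉ leaves T c d := fun hl =>
  h.ne ((h.adj_iff_of_mem_left hl).mp hm.1.symm).symm

lemma eq_or_mem_left (h : IsDoubleStar T c d) (hd : x ≠ d) (hm : x ∉ leaves T d c) :
    x = c ∨ x ∈ leaves T c d := by
  have := h.mem_cases x
  tauto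

lemma vdeg_left [Finite V] (h : IsDoubleStar T c d) : vdeg T c = (leaves T c d).ncard + 1 :=
  (Set.ncard_sdiff_singleton_add_one h.adj).symm

lemma vdeg_of_mem_left (h : IsDoubleStar T c d) (hl : l ∈ leaves T c d) : vdeg T l = 1 := by
  have : T.neighborSet l = {c} := Set.ext fun _ => h.adj_iff_of_mem_left hl
  rw [vdeg, this, Set.ncard_singleton]

lemma maxDeg_eq [Finite V] (h : IsDoubleStar T c d)
    (hle : (leaves T d c).ncard ≤ (leaves T c d).ncard) :
    maxDeg T = (leaves T c d).ncard + 1 := by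
  refine IsGreatest.csSup_eq ⟨⟨c, h.vdeg_left⟩, ?_⟩
  rintro _ ⟨x, rfl⟩
  rcases h.mem_cases x with rfl | rfl | hx | hx
  · exact h.vdeg_left.le
  · rw [h.symm.vdeg_left]
    omega
  · rw [h.vdeg_of_mem_left hx]
    omega
  · rw [h.symm.vdeg_of_mem_left hx]
    omega

lemma card_eq [Finite V] (h : IsDoubleStar T c d) :
    Nat.card V = (leaves T c d).ncard + (leaves T d c).ncard + 2 := by
  have hcompl : leaves T c d ∪ leaves T d c = {c, d}ᶜ := by
    ext x
    simp only [Set.mem_union, Set.mem_compl_iff, Set.mem_insert_iff, Set.mem_singleton_iff,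
      not_or]
    constructor
    · rintro (hx | hx)
      exacts [⟨hx.1.ne', hx.2⟩, ⟨hx.2, hx.1.ne'⟩]
    · have := h.mem_cases x
      tauto
  have hdisj : Disjoint (leaves T c d) (leaves T d c) :=
    Set.disjoint_right.mpr fun _ => h.not_mem_left_of_mem_right
  rw [← Set.ncard_add_ncard_compl {c, d}, ← hcompl, Set.ncard_union_eq hdisj,
    Set.ncard_pair h.ne]
  omega

end IsDoubleStar

lemma SimpleGraph.IsTree.isDoubleStar (hT : T.IsTree) (hdiam : ∀ a b, T.dist a b ≤ 3)
    {u v : V} (hcd : T.Adj c d) (huc : T.Adj u c) (hud : u ≠ d) (hvd : T.Adj v d)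
    (hvc : v ≠ c) : IsDoubleStar T c d := by
  have hcover := hT.eq_or_adj_of_forall_dist_le_three hdiam hcd huc hud hvd hvc
  have hcover' : ∀ x, x = d ∨ T.Adj x d ∨ x = c ∨ T.Adj x c := fun x => by
    have := hcover x; tauto
  refine ⟨hcd, fun x => ?_, fun l y hl => hT.eq_of_adj_of_adj hcover hcd hl.1 hl.2,
    fun m y hm => hT.eq_of_adj_of_adj hcover' hcd.symm hm.1 hm.2, ⟨u, huc.symm, hud⟩,
    ⟨v, hvd.symm, hvc⟩⟩
  simp only [mem_leaves]
  have := hcover x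
  by_cases hxc : x = c <;> by_cases hxd : x = d <;> simp_all [adj_comm]

lemma SimpleGraph.IsTree.exists_isDoubleStar [Finite V] (hT : T.IsTree)
    (hd : graphDiam T = 3) : ∃ c d, IsDoubleStar T c d := by
  have hdiam : ∀ a b, T.dist a b ≤ 3 := fun a b => hd ▸ dist_le_graphDiam a b
  obtain ⟨u, v, huv⟩ := exists_dist_eq_graphDiam (H := T) (by omega)
  obtain ⟨p, hp⟩ := (hT.connected u v).exists_walk_length_eq_dist
  rw [huv, hd] at hp
  match p, hp with
  | .cons huc (.cons hcd (.cons hdv .nil)), _ =>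
    refine ⟨_, _, hT.isDoubleStar hdiam hcd huc ?_ hdv.symm ?_⟩
    · rintro rfl
      have := dist_le hdv.toWalk
      simp_all
    · rintro rfl
      have := dist_le huc.toWalk
      simp_all
  | .nil, h | .cons _ .nil, h | .cons _ (.cons _ .nil), h
  | .cons _ (.cons _ (.cons _ (.cons _ _))), h => simp at h

end DoubleStar

section ComplementaryPrism

variable {V : Type*} {G : SimpleGraph V} {S : Set (V ⊕ V)} {a b : V}

@[simp]
lemma compPrism_adj_inl_inl : (compPrism G).Adj (.inl a) (.inl b) ↔ G.Adj a b := Iff.rfl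

@[simp]
lemma compPrism_adj_inr_inr : (compPrism G).Adj (.inr a) (.inr b) ↔ a ≠ b ∧ ¬G.Adj a b :=
  compl_adj G a b

@[simp]
lemma compPrism_adj_inl_inr : (compPrism G).Adj (.inl a) (.inr b) ↔ a = b := Iff.rfl

@[simp]
lemma compPrism_adj_inr_inl : (compPrism G).Adj (.inr a) (.inl b) ↔ a = b := Iff.rfl

lemma compPrism_dist_inl_inr (hab : a ≠ b) : (compPrism G).dist (.inl a) (.inr b) = 2 := by
  by_cases hG : G.Adj a b
  · exact dist_eq_two (by simp) (by simpa) (compPrism_adj_inl_inl.mpr hG) (by simp)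
  · exact dist_eq_two (w := .inr a) (by simp) (by simpa) (by simp) (by simp [hab, hG])

lemma compPrism_dist_inl_inr_le (a b : V) : (compPrism G).dist (.inl a) (.inr b) ≤ 2 := by
  rcases eq_or_ne a b with rfl | hab
  · exact dist_le_two_of_eq_or_adj (.inl rfl) (.inr (by simp))
  · exact (compPrism_dist_inl_inr hab).le

lemma IsGeoConvex.inl_mem_of_adj (hS : IsGeoConvex (compPrism G) S) (ha : .inl a ∈ S)
    (hb : .inr b ∈ S) (hab : G.Adj a b) : .inl b ∈ S :=
  hS.mem_of_dist_eq_two ha hb (compPrism_dist_inl_inr hab.ne) (by simpa) (by simp)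

lemma IsGeoConvex.inr_mem_of_not_adj (hS : IsGeoConvex (compPrism G) S) (ha : .inl a ∈ S)
    (hb : .inr b ∈ S) (hne : a ≠ b) (hab : ¬G.Adj a b) : .inr a ∈ S :=
  hS.mem_of_dist_eq_two ha hb (compPrism_dist_inl_inr hne) (by simp) (by simp [hne, hab])

lemma ncard_insert_insert_image_inl [Finite V] {s : Set V} {p q : V ⊕ V} (hpq : p ≠ q)
    (hp : p ∉ Sum.inl '' s) (hq : q ∉ Sum.inl '' s) :
    (insert p (insert q (Sum.inl '' s))).ncard = s.ncard + 2 := by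
  rw [Set.ncard_insert_of_notMem (by simp [hpq, hp]), Set.ncard_insert_of_notMem hq,
    Set.ncard_image_of_injective _ Sum.inl_injective]

lemma ncard_add_ncard_compl_sum [Finite V] (S : Set (V ⊕ V)) :
    S.ncard + Sᶜ.ncard = Nat.card V + Nat.card V := by
  rw [Set.ncard_add_ncard_compl, Nat.card_sum]

end ComplementaryPrism

section ExtremalSet

variable {V : Type*} {T : SimpleGraph V} {c d : V}

def extremalSet (T : SimpleGraph V) (c d : V) : Set (V ⊕ V) :=
  (insert (.inl d) (insert (.inr d) (Sum.inl '' leaves T d c)))ᶜ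

@[simp]
lemma inl_mem_extremalSet {x : V} :
    .inl x ∈ extremalSet T c d ↔ x ≠ d ∧ x ∉ leaves T d c := by
  simp [extremalSet]

@[simp]
lemma inr_mem_extremalSet {x : V} : .inr x ∈ extremalSet T c d ↔ x ≠ d := by
  simp [extremalSet]

lemma extremalSet_ne_univ : extremalSet T c d ≠ Set.univ :=
  Set.ne_univ_iff_exists_notMem _ |>.mpr ⟨.inl d, by simp⟩

end ExtremalSet

namespace IsDoubleStar

variable {V : Type*} {T : SimpleGraph V} {S : Set (V ⊕ V)} {c d l m : V}

lemma compPrism_dist_inr_inr (h : IsDoubleStar T c d) :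
    (compPrism T).dist (.inr c) (.inr d) = 3 := by
  refine dist_eq_three (by simp [h.ne]) (by simp [h.adj]) ?_ (x := .inl c) (y := .inl d)
    (by simp) (by simpa using h.adj) (by simp)
  rintro (z | z) h₁ h₂
  · simp only [compPrism_adj_inr_inl, compPrism_adj_inl_inr] at h₁ h₂
    exact h.ne (h₁.trans h₂)
  · simp only [compPrism_adj_inr_inr] at h₁ h₂
    rcases h.mem_cases z with rfl | rfl | hz | hz
    · exact h₁.1 rfl
    · exact h₂.1 rfl
    · exact h₁.2 hz.1
    · exact h₂.2 hz.1.symm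

lemma eq_univ_of_inr_mem (h : IsDoubleStar T c d) (hS : IsGeoConvex (compPrism T) S)
    (hc : .inr c ∈ S) (hd : .inr d ∈ S) : S = Set.univ := by
  have hcd := h.compPrism_dist_inr_inr
  obtain ⟨hc', hd'⟩ := hS.mem_of_dist_eq_three hc hd hcd (x := .inl c) (y := .inl d)
    (by simp) (by simpa using h.adj) (by simp)
  obtain ⟨l₀, hl₀⟩ := h.nonempty_left
  obtain ⟨m₀, hm₀⟩ := h.nonempty_right
  have hadj {l m : V} (hl : l ∈ leaves T c d) (hm : m ∈ leaves T d c) :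
      (compPrism T).Adj (.inr c) (.inr m) ∧ (compPrism T).Adj (.inr m) (.inr l) ∧
        (compPrism T).Adj (.inr l) (.inr d) := by
    simp only [compPrism_adj_inr_inr]
    exact ⟨⟨hm.2.symm, fun ha => h.symm.not_adj_of_mem_left hm h.ne ha.symm⟩,
      ⟨fun he => h.not_mem_left_of_mem_right hm (he ▸ hl),
        fun ha => h.not_adj_of_mem_left hl hm.2 ha.symm⟩,
      ⟨hl.2, h.not_adj_of_mem_left hl h.ne.symm⟩⟩
  have hL {l : V} (hl : l ∈ leaves T c d) : .inr l ∈ S :=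
    (hS.mem_of_dist_eq_three hc hd hcd (hadj hl hm₀).1 (hadj hl hm₀).2.1 (hadj hl hm₀).2.2).2
  have hM {m : V} (hm : m ∈ leaves T d c) : .inr m ∈ S :=
    (hS.mem_of_dist_eq_three hc hd hcd (hadj hl₀ hm).1 (hadj hl₀ hm).2.1 (hadj hl₀ hm).2.2).1
  refine Set.eq_univ_of_forall ?_
  rintro (x | x) <;> rcases h.mem_cases x with rfl | rfl | hx | hx
  exacts [hc', hd', hS.inl_mem_of_adj hc' (hL hx) hx.1, hS.inl_mem_of_adj hd' (hM hx) hx.1,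
    hc, hd, hL hx, hM hx]

lemma eq_univ_of_inl_mem (h : IsDoubleStar T c d) (hS : IsGeoConvex (compPrism T) S)
    (hl : l ∈ leaves T c d) (hm : m ∈ leaves T d c) (hlS : .inl l ∈ S) (hmS : .inl m ∈ S) :
    S = Set.univ := by
  have hlm : l ≠ m := fun he => h.not_mem_left_of_mem_right hm (he ▸ hl)
  have hna : ¬T.Adj l m := h.not_adj_of_mem_left hl hm.2
  have hnc : ¬T.Adj c m := fun ha => h.symm.not_adj_of_mem_left hm h.ne ha.symm
  have hnd : ¬T.Adj d l := fun ha => h.not_adj_of_mem_left hl h.ne.symm ha.symm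
  have hdist : (compPrism T).dist (.inl l) (.inl m) = 3 := by
    refine dist_eq_three (by simpa) (by simpa) ?_ (x := .inr l) (y := .inr m)
      (by simp) (by simp [hlm, hna]) (by simp)
    rintro (z | z) h₁ h₂
    · simp only [compPrism_adj_inl_inl] at h₁ h₂
      exact hnc ((h.adj_iff_of_mem_left hl).mp h₁ ▸ h₂)
    · simp only [compPrism_adj_inl_inr, compPrism_adj_inr_inl] at h₁ h₂
      exact hlm (h₁.trans h₂)
  obtain ⟨hlr, hmr⟩ := hS.mem_of_dist_eq_three hlS hmS hdist (x := .inr l) (y := .inr m)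
    (by simp) (by simp [hlm, hna]) (by simp)
  obtain ⟨hcl, hdl⟩ := hS.mem_of_dist_eq_three hlS hmS hdist (x := .inl c) (y := .inl d)
    (by simpa using hl.1.symm) (by simpa using h.adj) (by simpa using hm.1)
  exact h.eq_univ_of_inr_mem hS (hS.inr_mem_of_not_adj hcl hmr (fun he => hm.2 he.symm) hnc)
    (hS.inr_mem_of_not_adj hdl hlr (fun he => hl.2 he.symm) hnd)

/-- A proper convex set misses the `T`-copies of the leaves of `d`, one of `inr c`, `inr d`,
and either `inl d` or the `T̄`-copies of the leaves of `d`. -/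
lemma ncard_le (h : IsDoubleStar T c d) [Finite V] (hS : IsGeoConvex (compPrism T) S)
    (hne : S ≠ Set.univ) (hM : ∀ m ∈ leaves T d c, .inl m ∉ S) :
    S.ncard ≤ Nat.card V + (leaves T c d).ncard := by
  obtain ⟨m₀, hm₀⟩ := h.nonempty_right
  obtain ⟨p, hp, hpS⟩ : ∃ p, (p = .inr c ∨ p = .inr d) ∧ p ∉ S := by
    by_contra! hcd
    exact hne (h.eq_univ_of_inr_mem hS (hcd _ (.inl rfl)) (hcd _ (.inr rfl)))
  obtain ⟨q, hq, hqS⟩ : ∃ q, (q = .inl d ∨ q = .inr m₀) ∧ q ∉ S := by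
    by_contra! hdm
    exact hM m₀ hm₀ (hS.inl_mem_of_adj (hdm _ (.inl rfl)) (hdm _ (.inr rfl)) hm₀.1)
  have hsub : insert p (insert q (Sum.inl '' leaves T d c)) ⊆ Sᶜ := by
    rintro _ (rfl | rfl | ⟨m, hm, rfl⟩)
    exacts [hpS, hqS, hM m hm]
  have hcard : (insert p (insert q (Sum.inl '' leaves T d c))).ncard
      = (leaves T d c).ncard + 2 := by
    refine ncard_insert_insert_image_inl ?_ ?_ ?_ <;>
      rcases hp with rfl | rfl <;> rcases hq with rfl | rfl <;>
      simp [h.ne.symm, hm₀.2.symm, hm₀.1.ne]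
  have := Set.ncard_le_ncard hsub
  have := ncard_add_ncard_compl_sum S
  have := h.card_eq
  omega

lemma ncard_extremalSet [Finite V] (h : IsDoubleStar T c d) :
    (extremalSet T c d).ncard = Nat.card V + (leaves T c d).ncard := by
  have hcard := ncard_insert_insert_image_inl (p := .inl d) (q := .inr d)
    (s := leaves T d c) (by simp) (by simp) (by simp)
  have := ncard_add_ncard_compl_sum (extremalSet T c d)
  have := h.card_eq
  rw [extremalSet, compl_compl] at *
  omega

lemma dist_le_two_of_mem_extremalSet (h : IsDoubleStar T c d) :
    ∀ u ∈ extremalSet T c d, ∀ v ∈ extremalSet T c d, (compPrism T).dist u v ≤ 2 := by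
  obtain ⟨m₀, hm₀⟩ := h.nonempty_right
  have hl (x : V) (hx : .inl x ∈ extremalSet T c d) : x = c ∨ T.Adj x c := by
    rcases h.eq_or_mem_left (inl_mem_extremalSet.mp hx).1 (inl_mem_extremalSet.mp hx).2
      with rfl | hx
    exacts [.inl rfl, .inr hx.1.symm]
  have hr (x : V) (hx : .inr x ∈ extremalSet T c d) :
      (Sum.inr x : V ⊕ V) = .inr m₀ ∨ (compPrism T).Adj (.inr x) (.inr m₀) := by
    by_cases hxm : x = m₀
    · exact .inl (hxm ▸ rfl)
    · exact .inr ⟨hxm, fun ha => inr_mem_extremalSet.mp hx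
        ((h.symm.adj_iff_of_mem_left hm₀).mp ha.symm)⟩
  rintro (x | x) hx (y | y) hy
  · exact dist_le_two_of_eq_or_adj (w := .inl c) (by simpa using hl x hx)
      (by simpa [eq_comm, adj_comm] using hl y hy)
  · exact compPrism_dist_inl_inr_le x y
  · exact dist_comm (G := compPrism T) ▸ compPrism_dist_inl_inr_le y x
  · exact dist_le_two_of_eq_or_adj (hr x hx) (by simpa [eq_comm, adj_comm] using hr y hy)

lemma eq_of_mem_extremalSet_of_adj_inl (h : IsDoubleStar T c d) {x : V} {u : V ⊕ V}
    (hx : .inl x ∉ extremalSet T c d) (hu : u ∈ extremalSet T c d)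
    (hadj : (compPrism T).Adj u (.inl x)) : x = d ∧ u = .inl c ∨ x ≠ d ∧ u = .inr x := by
  have hx' : x = d ∨ x ∈ leaves T d c := by
    simp only [inl_mem_extremalSet, not_and, not_not] at hx
    tauto
  rcases u with y | y
  · simp only [inl_mem_extremalSet, compPrism_adj_inl_inl] at hu hadj
    rcases hx' with rfl | hx'
    · rcases h.eq_or_mem_left hu.1 hu.2 with rfl | hy
      · exact .inl ⟨rfl, rfl⟩
      · exact absurd hadj (h.not_adj_of_mem_left hy h.ne.symm)
    · exact absurd hadj.symm (h.symm.not_adj_of_mem_left hx' hu.1)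
  · simp only [inr_mem_extremalSet, compPrism_adj_inr_inl] at hu hadj
    subst hadj
    exact .inr ⟨hu, rfl⟩

lemma exists_eq_inr_of_mem_extremalSet_of_adj_inr (h : IsDoubleStar T c d) {u : V ⊕ V}
    (hu : u ∈ extremalSet T c d) (hadj : (compPrism T).Adj u (.inr d)) :
    ∃ l ∈ leaves T c d, u = .inr l := by
  rcases u with y | y
  · simp_all
  · simp only [inr_mem_extremalSet, compPrism_adj_inr_inr] at hu hadj
    have hyM : y ∉ leaves T d c := fun hy => hadj.2 hy.1.symm
    rcases h.eq_or_mem_left hu hyM with rfl | hy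
    · exact absurd h.adj hadj.2
    · exact ⟨y, hy, rfl⟩

lemma isGeoConvex_extremalSet (h : IsDoubleStar T c d) :
    IsGeoConvex (compPrism T) (extremalSet T c d) := by
  refine isGeoConvex_of_dist_le_two h.dist_le_two_of_mem_extremalSet ?_
  rintro (x | x) hw u hu v hv hu' hv'
  · have hu'' := h.eq_of_mem_extremalSet_of_adj_inl hw hu hu'
    have hv'' := h.eq_of_mem_extremalSet_of_adj_inl hw hv hv'.symm
    rcases hu'' with ⟨hx, rfl⟩ | ⟨hx, rfl⟩ <;> rcases hv'' with ⟨hx', rfl⟩ | ⟨hx', rfl⟩ <;>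
      first | exact .inl rfl | contradiction
  · obtain rfl : x = d := by simpa using hw
    obtain ⟨l, hl, rfl⟩ := h.exists_eq_inr_of_mem_extremalSet_of_adj_inr hu hu'
    obtain ⟨l', hl', rfl⟩ := h.exists_eq_inr_of_mem_extremalSet_of_adj_inr hv hv'.symm
    by_cases hll : l = l'
    · exact .inl (hll ▸ rfl)
    · exact .inr ⟨hll, h.not_adj_of_mem_left hl hl'.1.ne'⟩

lemma convexityNumber_compPrism [Finite V] (h : IsDoubleStar T c d)
    (hle : (leaves T d c).ncard ≤ (leaves T c d).ncard) :
    convexityNumber (compPrism T) = Nat.card V + (leaves T c d).ncard := by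
  refine IsGreatest.csSup_eq ⟨⟨_, h.isGeoConvex_extremalSet, extremalSet_ne_univ,
    h.ncard_extremalSet⟩, ?_⟩
  rintro _ ⟨S, hS, hne, rfl⟩
  by_cases hM : ∃ m ∈ leaves T d c, .inl m ∈ S
  · obtain ⟨m, hm, hmS⟩ := hM
    by_cases hL : ∃ l ∈ leaves T c d, .inl l ∈ S
    · obtain ⟨l, hl, hlS⟩ := hL
      exact absurd (h.eq_univ_of_inl_mem hS hl hm hlS hmS) hne
    · have := h.symm.ncard_le hS hne fun l hl hlS => hL ⟨l, hl, hlS⟩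
      omega
  · exact h.ncard_le hS hne fun m hm hmS => hM ⟨m, hm, hmS⟩

end IsDoubleStar

theorem stmt12 {V : Type*} [Fintype V] (T : SimpleGraph V) (hT : T.IsTree)
    (hd : graphDiam T = 3) :
    convexityNumber (compPrism T) = Nat.card V + maxDeg T - 1 := by
  obtain ⟨c, d, h⟩ := hT.exists_isDoubleStar hd
  wlog hle : (leaves T d c).ncard ≤ (leaves T c d).ncard generalizing c d
  · exact this d c h.symm (by omega)
  rw [h.convexityNumber_compPrism hle, h.maxDeg_eq hle]
  omega
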